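/- Let X be a set, (Y,ℱ) a coarse space, and f, g : X → Y maps with induced quantum functions φ_f, φ_g : ℓ∞(Y) → ℓ∞(X) (φ_f(h) = h∘f, φ_g(h) = h∘g). Then f and g are close (i.e., there is F ∈ ℱ with (f(x),g(x)) ∈ F for all x ∈ X) if and only if φ_f and φ_g are quantum close: there is F ∈ ℱ such that (p,q) ∈ R_F for all orthogonal projections p, q ∈ ℓ∞(Y) ⊗̄ B(ℓ²) with (φ_f⊗1)(p)·(φ_g⊗1)(q) ≠ 0. -/

import Mathlib

/-!
Computing matrix coefficients, `(φ_f ⊗ 1)(p) (φ_g ⊗ 1)(q)` is block diagonal, and its `x`-th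
block is the `(f x, g x)`-block of `p (e_{f x, g x} ⊗ 1) q`. Hence if `F` contains every
`(f x, g x)` and `(p, q) ∉ R_F`, all these blocks vanish and so does the product. Conversely, for
`p = e_{f x, f x} ⊗ 1` and `q = e_{g x, g x} ⊗ 1` the product is nonzero, while
`p (e_{b c} ⊗ 1) q ≠ 0` only for `(b, c) = (f x, g x)`; so quantum closeness puts
`(f x, g x)` in `F`.
-/

open scoped ENNReal Classical

noncomputable section

namespace QCG

/-- A (classical) coarse structure on a set `X`. -/
structure IsCoarseStructure (X : Type*) (ℰ : Set (Set (X × X))) : Prop where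
  diagonal_mem : {p : X × X | p.1 = p.2} ∈ ℰ
  subset_mem : ∀ E ∈ ℰ, ∀ F : Set (X × X), F ⊆ E → F ∈ ℰ
  inv_mem : ∀ E ∈ ℰ, {p : X × X | (p.2, p.1) ∈ E} ∈ ℰ
  union_mem : ∀ E ∈ ℰ, ∀ F ∈ ℰ, E ∪ F ∈ ℰ
  comp_mem : ∀ E ∈ ℰ, ∀ F ∈ ℰ, {p : X × X | ∃ z : X, (p.1, z) ∈ E ∧ (z, p.2) ∈ F} ∈ ℰ

/-- `ℓ²(X × ℕ)`, on which `ℓ∞(X) ⊗̄ B(ℓ²)` is realized. -/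
abbrev ltwoXN (X : Type*) : Type _ := lp (fun _ : X × ℕ => ℂ) 2

/-- The standard unit vector `δ_(x,n) ∈ ℓ²(X × ℕ)`. -/
def deltaXN {X : Type*} (z : X × ℕ) : ltwoXN X := lp.single 2 z 1

/-- `b` belongs to `ℓ∞(X) ⊗̄ B(ℓ²)`: it acts blockwise, i.e. its matrix entries between
different `X`-blocks vanish. -/
def Blockwise {X : Type*} (b : ltwoXN X →L[ℂ] ltwoXN X) : Prop :=
  ∀ x y : X, x ≠ y → ∀ m n : ℕ,
    (inner ℂ (b (deltaXN (y, m))) (deltaXN (x, n)) : ℂ) = 0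

/-- An orthogonal projection in `ℓ∞(X) ⊗̄ B(ℓ²)`. -/
def IsBlkProj {X : Type*} (p : ltwoXN X →L[ℂ] ltwoXN X) : Prop :=
  Blockwise p ∧ IsIdempotentElem p ∧ IsSelfAdjoint p

/-- `e x y = e_{xy} ⊗ 1`: the operator sending `δ_(y,n)` to `δ_(x,n)` for every `n`
and vanishing on `δ_(z,n)` for `z ≠ y`. -/
def IsMatUnits {X : Type*} (e : X → X → (ltwoXN X →L[ℂ] ltwoXN X)) : Prop :=
  ∀ (x y z : X) (n : ℕ),
    e x y (deltaXN (z, n)) = if z = y then deltaXN (x, n) else 0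

/-- The intrinsic quantum relation `R_E` associated to a relation `E ⊆ X × X`:
`(p, q) ∈ R_E` iff `p (e_{xy} ⊗ 1) q ≠ 0` for some `(x, y) ∈ E`. -/
def RelE {X : Type*} (e : X → X → (ltwoXN X →L[ℂ] ltwoXN X)) (E : Set (X × X))
    (p q : ltwoXN X →L[ℂ] ltwoXN X) : Prop :=
  ∃ w ∈ E, p * e w.1 w.2 * q ≠ 0

/-- `Φ` is the amplification `φ_f ⊗ 1 : ℓ∞(Y) ⊗̄ B(ℓ²) → ℓ∞(X) ⊗̄ B(ℓ²)` of the quantum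
function `φ_f : ℓ∞(Y) → ℓ∞(X)` induced by `f : X → Y`; it sends `(b_y)_{y ∈ Y}` to
`(b_{f x})_{x ∈ X}`, which is encoded by its matrix entries. -/
def IsAmplifiedPullback {X Y : Type*} (f : X → Y)
    (Φ : (ltwoXN Y →L[ℂ] ltwoXN Y) → (ltwoXN X →L[ℂ] ltwoXN X)) : Prop :=
  ∀ b : ltwoXN Y →L[ℂ] ltwoXN Y, Blockwise b →
    ∀ (x x' : X) (m n : ℕ),
      (inner ℂ (Φ b (deltaXN (x', m))) (deltaXN (x, n)) : ℂ) =
        if x = x' then (inner ℂ (b (deltaXN (f x', m))) (deltaXN (f x', n)) : ℂ) else 0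

section Coordinates

variable {X : Type*}

lemma deltaXN_apply (i j : X × ℕ) : deltaXN i j = if j = i then 1 else 0 := by
  simp [deltaXN, Pi.single_apply]

lemma inner_deltaXN_left (i : X × ℕ) (v : ltwoXN X) : inner ℂ (deltaXN i) v = v i := by
  simpa [deltaXN] using lp.inner_single_left (𝕜 := ℂ) i (1 : ℂ) v

lemma inner_deltaXN_right (v : ltwoXN X) (i : X × ℕ) :
    inner ℂ v (deltaXN i) = starRingEnd ℂ (v i) := by
  rw [← inner_conj_symm, inner_deltaXN_left]

lemma hasSum_apply_deltaXN (A : ltwoXN X →L[ℂ] ltwoXN X) (v : ltwoXN X) :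
    HasSum (fun k => v k • A (deltaXN k)) (A v) := by
  have hv : HasSum (fun k => v k • deltaXN k) v :=
    (lp.hasSum_single ENNReal.ofNat_ne_top v).congr_fun fun k => by
      rw [deltaXN, ← lp.single_smul, smul_eq_mul, mul_one]
  simpa only [map_smul] using hv.mapL A

lemma ContinuousLinearMap.ext_deltaXN {A B : ltwoXN X →L[ℂ] ltwoXN X}
    (h : ∀ i, A (deltaXN i) = B (deltaXN i)) : A = B :=
  ContinuousLinearMap.ext fun v =>
    (hasSum_apply_deltaXN A v).unique (by simpa only [h] using hasSum_apply_deltaXN B v)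

lemma hasSum_apply_apply (A : ltwoXN X →L[ℂ] ltwoXN X) (v : ltwoXN X) (i : X × ℕ) :
    HasSum (fun k => v k * A (deltaXN k) i) (A v i) := by
  simpa only [map_smul, innerSL_apply_apply, inner_deltaXN_left, smul_eq_mul]
    using (hasSum_apply_deltaXN A v).mapL (innerSL ℂ (deltaXN i))

lemma isSelfAdjoint_of_apply_deltaXN {A : ltwoXN X →L[ℂ] ltwoXN X}
    (h : ∀ i j, A (deltaXN i) j = starRingEnd ℂ (A (deltaXN j) i)) : IsSelfAdjoint A := by
  rw [ContinuousLinearMap.isSelfAdjoint_iff']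
  refine ContinuousLinearMap.ext_deltaXN fun i => lp.ext <| funext fun j => ?_
  rw [← inner_deltaXN_left, ContinuousLinearMap.adjoint_inner_right, inner_deltaXN_right, h,
    Complex.conj_conj]

lemma hasSum_fibre_iff {u : X × ℕ → ℂ} {a : ℂ} (x : X) (hu : ∀ z k, z ≠ x → u (z, k) = 0) :
    HasSum u a ↔ HasSum (fun k => u (x, k)) a := by
  have hinj : Function.Injective fun k : ℕ => (x, k) := fun k l hkl => by simpa using hkl
  refine (hinj.hasSum_iff ?_).symm
  rintro ⟨z, k⟩ hzk
  exact hu z k fun hz => hzk ⟨k, by rw [hz]⟩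

end Coordinates

lemma IsAmplifiedPullback.apply {X Y : Type*} {f : X → Y}
    {Φ : (ltwoXN Y →L[ℂ] ltwoXN Y) → (ltwoXN X →L[ℂ] ltwoXN X)} (hΦ : IsAmplifiedPullback f Φ)
    {b : ltwoXN Y →L[ℂ] ltwoXN Y} (hb : Blockwise b) (x x' : X) (m n : ℕ) :
    Φ b (deltaXN (x', m)) (x, n) = if x = x' then b (deltaXN (f x', m)) (f x', n) else 0 := by
  have h := congrArg (starRingEnd ℂ) (hΦ b hb x x' m n)
  simp only [inner_deltaXN_right, Complex.conj_conj] at h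
  rw [h]
  split_ifs <;> simp

section MatrixUnits

variable {Y : Type*} {e : Y → Y → (ltwoXN Y →L[ℂ] ltwoXN Y)}

lemma IsMatUnits.apply_apply (he : IsMatUnits e) (x y : Y) (j i : Y × ℕ) :
    e x y (deltaXN j) i = if j.1 = y ∧ i = (x, j.2) then 1 else 0 := by
  rw [he]
  split_ifs <;> simp_all [deltaXN_apply]

lemma IsMatUnits.isBlkProj_diag (he : IsMatUnits e) (y : Y) : IsBlkProj (e y y) := by
  refine ⟨fun x z hxz m n => ?_, ?_, isSelfAdjoint_of_apply_deltaXN fun i j => ?_⟩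
  · rw [inner_deltaXN_right, he.apply_apply]
    split_ifs with h
    · exact absurd (h.1.trans (congrArg Prod.fst h.2).symm) hxz.symm
    · simp
  · refine ContinuousLinearMap.ext_deltaXN fun ⟨z, k⟩ => ?_
    rw [mul_apply_eq_comp, he]
    split_ifs with hz
    · rw [he, if_pos rfl]
    · simp
  · rw [he.apply_apply, he.apply_apply]
    split_ifs <;> simp_all [Prod.ext_iff]

lemma IsMatUnits.mul_mul_diag_eq_zero (he : IsMatUnits e) {a b c d : Y}
    (h : (b, c) ≠ (a, d)) : e a a * e b c * e d d = 0 := by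
  refine ContinuousLinearMap.ext_deltaXN fun ⟨z, k⟩ => ?_
  simp only [mul_apply_eq_comp, zero_apply]
  rw [he]
  split_ifs with hd
  · rw [he]
    split_ifs with hc
    · rw [he, if_neg fun hb => h (by simp_all)]
    · rw [map_zero]
  · rw [map_zero, map_zero]

end MatrixUnits

section Pullbacks

variable {X Y : Type*} {f g : X → Y} {e : Y → Y → (ltwoXN Y →L[ℂ] ltwoXN Y)}
  {Φf Φg : (ltwoXN Y →L[ℂ] ltwoXN Y) → (ltwoXN X →L[ℂ] ltwoXN X)}

lemma IsAmplifiedPullback.mul_apply_deltaXN (he : IsMatUnits e)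
    (hΦf : IsAmplifiedPullback f Φf) (hΦg : IsAmplifiedPullback g Φg)
    {p q : ltwoXN Y →L[ℂ] ltwoXN Y} (hp : Blockwise p) (hq : Blockwise q)
    (x x' : X) (m n : ℕ) :
    (Φf p * Φg q) (deltaXN (x', m)) (x, n) =
      if x = x' then (p * e (f x) (g x) * q) (deltaXN (g x, m)) (f x, n) else 0 := by
  have hlhs := hasSum_apply_apply (Φf p) (Φg q (deltaXN (x', m))) (x, n)
  rw [← mul_apply_eq_comp] at hlhs
  by_cases hxx : x = x'
  · subst hxx
    rw [if_pos rfl]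
    have hrhs := hasSum_apply_apply (p * e (f x) (g x)) (q (deltaXN (g x, m))) (f x, n)
    rw [← mul_apply_eq_comp] at hrhs
    rw [hasSum_fibre_iff x fun z k hz => by rw [hΦf.apply hp, if_neg (Ne.symm hz), mul_zero]]
      at hlhs
    rw [hasSum_fibre_iff (g x) fun z k hz => by
      rw [mul_apply_eq_comp, he, if_neg hz, map_zero]; simp] at hrhs
    simp only [hΦf.apply hp, hΦg.apply hq, if_true] at hlhs
    rw [mul_apply_eq_comp, mul_apply_eq_comp]
    refine hlhs.unique (hrhs.congr_fun fun k => ?_)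
    rw [mul_apply_eq_comp, he, if_pos rfl]
  · rw [if_neg hxx]
    refine hlhs.unique (hasSum_zero.congr_fun fun ⟨z, k⟩ => ?_)
    rw [hΦf.apply hp, hΦg.apply hq]
    by_cases hz : z = x'
    · rw [if_neg (show x ≠ z from fun h => hxx (h.trans hz)), mul_zero]
    · rw [if_neg hz, zero_mul]

lemma IsAmplifiedPullback.mul_eq_zero (he : IsMatUnits e)
    (hΦf : IsAmplifiedPullback f Φf) (hΦg : IsAmplifiedPullback g Φg)
    {p q : ltwoXN Y →L[ℂ] ltwoXN Y} (hp : Blockwise p) (hq : Blockwise q)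
    (h : ∀ x, p * e (f x) (g x) * q = 0) : Φf p * Φg q = 0 := by
  refine ContinuousLinearMap.ext_deltaXN fun ⟨x', m⟩ => lp.ext <| funext fun ⟨x, n⟩ => ?_
  rw [hΦf.mul_apply_deltaXN he hΦg hp hq, h]
  simp

lemma IsAmplifiedPullback.mul_diag_ne_zero (he : IsMatUnits e)
    (hΦf : IsAmplifiedPullback f Φf) (hΦg : IsAmplifiedPullback g Φg) (x : X) :
    Φf (e (f x) (f x)) * Φg (e (g x) (g x)) ≠ 0 := by
  intro h
  have hx := hΦf.mul_apply_deltaXN he hΦg (he.isBlkProj_diag (f x)).1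
    (he.isBlkProj_diag (g x)).1 x x 0 0
  rw [h, if_pos rfl, mul_apply_eq_comp, mul_apply_eq_comp, he, if_pos rfl, he, if_pos rfl, he,
    if_pos rfl, deltaXN_apply, if_pos rfl] at hx
  exact zero_ne_one hx

end Pullbacks

theorem statement18_general {X Y : Type*} (ℱ : Set (Set (Y × Y)))
    (f g : X → Y)
    (eY : Y → Y → (ltwoXN Y →L[ℂ] ltwoXN Y)) (heY : IsMatUnits eY)
    (Φf : (ltwoXN Y →L[ℂ] ltwoXN Y) → (ltwoXN X →L[ℂ] ltwoXN X))
    (hΦf : IsAmplifiedPullback f Φf)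
    (Φg : (ltwoXN Y →L[ℂ] ltwoXN Y) → (ltwoXN X →L[ℂ] ltwoXN X))
    (hΦg : IsAmplifiedPullback g Φg) :
    (∃ F ∈ ℱ, ∀ x : X, (f x, g x) ∈ F) ↔
      (∃ F ∈ ℱ, ∀ p q : ltwoXN Y →L[ℂ] ltwoXN Y, IsBlkProj p → IsBlkProj q →
        Φf p * Φg q ≠ 0 → RelE eY F p q) := by
  constructor
  · rintro ⟨F, hF, hclose⟩
    refine ⟨F, hF, fun p q hp hq hne => ?_⟩
    by_contra hrel
    refine hne (hΦf.mul_eq_zero heY hΦg hp.1 hq.1 fun x => ?_)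
    by_contra hx
    exact hrel ⟨(f x, g x), hclose x, hx⟩
  · rintro ⟨F, hF, hquantum⟩
    refine ⟨F, hF, fun x => ?_⟩
    obtain ⟨w, hwF, hw⟩ := hquantum _ _ (heY.isBlkProj_diag (f x)) (heY.isBlkProj_diag (g x))
      (hΦf.mul_diag_ne_zero heY hΦg x)
    have hwx : w = (f x, g x) := by
      by_contra hne
      exact hw (heY.mul_mul_diag_eq_zero hne)
    exact hwx ▸ hwF

/-- Maps `f, g : X → Y` into a coarse space `(Y, ℱ)` are close if and only if the induced
quantum functions `φ_f, φ_g : ℓ∞(Y) → ℓ∞(X)` are quantum close: there is `F ∈ ℱ` with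
`(p, q) ∈ R_F` for all projections `p, q ∈ ℓ∞(Y) ⊗̄ B(ℓ²)` with
`(φ_f ⊗ 1)(p) · (φ_g ⊗ 1)(q) ≠ 0`. -/
theorem statement18 {X Y : Type*} (ℱ : Set (Set (Y × Y)))
    (hℱ : IsCoarseStructure Y ℱ) (f g : X → Y)
    (eY : Y → Y → (ltwoXN Y →L[ℂ] ltwoXN Y)) (heY : IsMatUnits eY)
    (Φf : (ltwoXN Y →L[ℂ] ltwoXN Y) → (ltwoXN X →L[ℂ] ltwoXN X))
    (hΦf : IsAmplifiedPullback f Φf)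
    (Φg : (ltwoXN Y →L[ℂ] ltwoXN Y) → (ltwoXN X →L[ℂ] ltwoXN X))
    (hΦg : IsAmplifiedPullback g Φg) :
    (∃ F ∈ ℱ, ∀ x : X, (f x, g x) ∈ F) ↔
      (∃ F ∈ ℱ, ∀ p q : ltwoXN Y →L[ℂ] ltwoXN Y, IsBlkProj p → IsBlkProj q →
        Φf p * Φg q ≠ 0 → RelE eY F p q) :=
  statement18_general ℱ f g eY heY Φf hΦf Φg hΦg

end QCG
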